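/- Let A be a Banach algebra, I a closed right ideal of A possessing a bounded approximate identity (a bounded net (e_α) in I with e_α x → x for all x ∈ I), and J a closed left ideal of A. Then I + J is a closed subspace of A. -/

import Mathlib

/-!
Write `T_α x = e_α x`. For `h = u + w` with `u ∈ I`, `w ∈ J`, the splitting
`h = (u + T_α w) + (w - T_α w)` is again one along `I + J`, since `T_α` maps `A` into `I` and `J`
into `J`; and as `u + T_α w = T_α h + (u - T_α u)` with `u - T_α u → 0`, both summands have norm
`O(‖h‖)` for a suitable `α`. A uniform bound on the splittings of the elements of `I + J` passes
to its closure by summing a geometric series of corrections in the Banach space `I × J`, as in the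
open mapping theorem, so the closure is `I + J` itself.
-/

open ContinuousLinearMap Filter Topology

namespace Paper

structure Bimod (A : Type*) [NormedRing A] [NormedAlgebra ℂ A]
    (X : Type*) [NormedAddCommGroup X] [NormedSpace ℂ X] where
  l : A → X →L[ℂ] X
  r : A → X →L[ℂ] X
  l_mul : ∀ a b x, l (a * b) x = l a (l b x)
  r_mul : ∀ a b x, r (a * b) x = r b (r a x)
  lr : ∀ a b x, l a (r b x) = r b (l a x)

variable {A : Type*} [NormedRing A] [NormedAlgebra ℂ A]
variable {X : Type*} [NormedAddCommGroup X] [NormedSpace ℂ X]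

noncomputable def Bimod.dual (M : Bimod A X) : Bimod A (X →L[ℂ] ℂ) where
  l a := (compL ℂ X X ℂ).flip (M.r a)
  r a := (compL ℂ X X ℂ).flip (M.l a)
  l_mul a b f := by ext x; simp [M.r_mul]
  r_mul a b f := by ext x; simp [M.l_mul]
  lr a b f := by ext x; simp [M.lr]

def IsDerivation (M : Bimod A X) (D : A →L[ℂ] X) : Prop :=
  ∀ a b, D (a * b) = M.l a (D b) + M.r b (D a)

def IsInner (M : Bimod A X) (D : A →L[ℂ] X) : Prop :=
  ∃ x, ∀ a, D a = M.l a x - M.r a x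

noncomputable def Bimod.restrict (M : Bimod A X) (Y : Submodule ℂ X)
    (hl : ∀ a, ∀ y ∈ Y, M.l a y ∈ Y) (hr : ∀ a, ∀ y ∈ Y, M.r a y ∈ Y) :
    Bimod A Y where
  l a := ((M.l a).comp Y.subtypeL).codRestrict Y fun y => hl a y y.2
  r a := ((M.r a).comp Y.subtypeL).codRestrict Y fun y => hr a y y.2
  l_mul a b y := Subtype.ext (M.l_mul a b y)
  r_mul a b y := Subtype.ext (M.r_mul a b y)
  lr a b y := Subtype.ext (M.lr a b y)

noncomputable def algBimod (A : Type*) [NormedRing A] [NormedAlgebra ℂ A] : Bimod A A where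
  l a := ContinuousLinearMap.mul ℂ A a
  r a := (ContinuousLinearMap.mul ℂ A).flip a
  l_mul a b x := mul_assoc a b x
  r_mul a b x := (mul_assoc x a b).symm
  lr a b x := (mul_assoc a x b).symm

noncomputable def idealBimod (I : Submodule ℂ A)
    (hL : ∀ a, ∀ x ∈ I, a * x ∈ I) (hR : ∀ a, ∀ x ∈ I, x * a ∈ I) :
    Bimod A I where
  l a := ((ContinuousLinearMap.mul ℂ A a).comp I.subtypeL).codRestrict I fun x => hL a x x.2
  r a := (((ContinuousLinearMap.mul ℂ A).flip a).comp I.subtypeL).codRestrict I fun x => hR a x x.2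
  l_mul a b x := Subtype.ext (mul_assoc a b (x : A))
  r_mul a b x := Subtype.ext (mul_assoc (x : A) a b).symm
  lr a b x := Subtype.ext (mul_assoc a (x : A) b).symm

section SumOfSubgroups

open Pointwise

variable {E : Type*} [NormedAddCommGroup E] {I J : AddSubgroup E}

def _root_.AddSubgroup.addNormedHom (I J : AddSubgroup E) : NormedAddGroupHom (I × J) E :=
  (I.subtype.coprod J.subtype).mkNormedAddGroupHom 2 fun x => by
    have hsum : ‖(x.1 : E) + x.2‖ ≤ ‖x.1‖ + ‖x.2‖ := norm_add_le _ _
    have h₁ : ‖x.1‖ ≤ ‖x‖ := norm_fst_le x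
    have h₂ : ‖x.2‖ ≤ ‖x‖ := norm_snd_le x
    simp only [AddMonoidHom.coprod_apply, AddSubgroup.coe_subtype]
    linarith

@[simp]
theorem _root_.AddSubgroup.addNormedHom_apply (x : I × J) : I.addNormedHom J x = x.1 + x.2 := rfl

theorem _root_.AddSubgroup.coe_range_addNormedHom :
    ((I.addNormedHom J).range : Set E) = (I : Set E) + (J : Set E) := by
  ext h
  simp [NormedAddGroupHom.mem_range, Set.mem_add]

theorem _root_.AddSubgroup.isClosed_add_of_forall_exists_norm_le [CompleteSpace E]
    (hI : IsClosed (I : Set E)) (hJ : IsClosed (J : Set E)) {K : ℝ}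
    (hK : ∀ h ∈ (I : Set E) + (J : Set E),
      ∃ u ∈ I, ∃ w ∈ J, u + w = h ∧ ‖u‖ ≤ K * ‖h‖ ∧ ‖w‖ ≤ K * ‖h‖) :
    IsClosed ((I : Set E) + (J : Set E)) := by
  have : CompleteSpace I := hI.completeSpace_coe
  have : CompleteSpace J := hJ.completeSpace_coe
  set f := I.addNormedHom J
  have hsurj : f.SurjectiveOnWith f.range K := by
    rintro h hh
    rw [← SetLike.mem_coe, AddSubgroup.coe_range_addNormedHom] at hh
    obtain ⟨u, hu, w, hw, rfl, hu', hw'⟩ := hK h hh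
    exact ⟨(⟨u, hu⟩, ⟨w, hw⟩), rfl, max_le hu' hw'⟩
  obtain ⟨K', hK', hsurj'⟩ := hsurj.exists_pos
  have hclosure := controlled_closure_of_complete hK' one_pos hsurj'
  rw [← AddSubgroup.coe_range_addNormedHom]
  refine isClosed_of_closure_subset fun h hh => ?_
  obtain ⟨g, rfl, -⟩ :=
    hclosure h (by rwa [← SetLike.mem_coe, AddSubgroup.topologicalClosure_coe])
  exact f.mem_range_self g

theorem _root_.AddSubgroup.exists_add_eq_norm_le_of_approxIdentity {ι : Type*} {p : Filter ι}
    [p.NeBot] {T : ι → E →+ E} {C : ℝ} (hTI : ∀ i x, T i x ∈ I) (hTJ : ∀ i, ∀ x ∈ J, T i x ∈ J)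
    (hT : ∀ i x, ‖T i x‖ ≤ C * ‖x‖) (hTid : ∀ x ∈ I, Tendsto (fun i => T i x) p (𝓝 x))
    {h : E} (hh : h ∈ (I : Set E) + (J : Set E)) :
    ∃ u ∈ I, ∃ w ∈ J, u + w = h ∧ ‖u‖ ≤ (C + 2) * ‖h‖ ∧ ‖w‖ ≤ (C + 2) * ‖h‖ := by
  rcases eq_or_ne h 0 with rfl | hh0
  · exact ⟨0, I.zero_mem, 0, J.zero_mem, add_zero 0, by simp, by simp⟩
  obtain ⟨u, hu, w, hw, rfl⟩ := Set.mem_add.mp hh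
  obtain ⟨i, hi⟩ : ∃ i, ‖u - T i u‖ < ‖u + w‖ := by
    have := (hTid u hu).eventually (Metric.ball_mem_nhds u (norm_pos_iff.mpr hh0))
    simpa [dist_eq_norm'] using this.exists
  have hu' : ‖u + T i w‖ ≤ (C + 1) * ‖u + w‖ :=
    calc ‖u + T i w‖ = ‖T i (u + w) + (u - T i u)‖ := by rw [map_add]; abel_nf
      _ ≤ ‖T i (u + w)‖ + ‖u - T i u‖ := norm_add_le _ _
      _ ≤ C * ‖u + w‖ + ‖u + w‖ := add_le_add (hT i _) hi.le
      _ = (C + 1) * ‖u + w‖ := by ring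
  refine ⟨u + T i w, I.add_mem hu (hTI i w), w - T i w, J.sub_mem hw (hTJ i w hw), by abel,
    ?_, ?_⟩
  · linarith [norm_nonneg (u + w)]
  · calc ‖w - T i w‖ = ‖(u + w) - (u + T i w)‖ := by abel_nf
      _ ≤ ‖u + w‖ + ‖u + T i w‖ := norm_sub_le _ _
      _ ≤ (C + 2) * ‖u + w‖ := by linarith

theorem _root_.AddSubgroup.isClosed_add_of_approxIdentity [CompleteSpace E]
    (hI : IsClosed (I : Set E)) (hJ : IsClosed (J : Set E)) {ι : Type*} {p : Filter ι} [p.NeBot]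
    {T : ι → E →+ E} {C : ℝ} (hTI : ∀ i x, T i x ∈ I) (hTJ : ∀ i, ∀ x ∈ J, T i x ∈ J)
    (hT : ∀ i x, ‖T i x‖ ≤ C * ‖x‖) (hTid : ∀ x ∈ I, Tendsto (fun i => T i x) p (𝓝 x)) :
    IsClosed ((I : Set E) + (J : Set E)) :=
  AddSubgroup.isClosed_add_of_forall_exists_norm_le hI hJ fun _ hh =>
    AddSubgroup.exists_add_eq_norm_le_of_approxIdentity hTI hTJ hT hTid hh

end SumOfSubgroups

open Pointwise in
theorem stmt_15
    {A : Type*} [NormedRing A] [NormedAlgebra ℂ A] [CompleteSpace A]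
    (I J : Submodule ℂ A)
    (hIc : IsClosed (I : Set A)) (hJc : IsClosed (J : Set A))
    -- $I$ is a right ideal, $J$ a left ideal
    (hIR : ∀ a : A, ∀ x ∈ I, x * a ∈ I) (hJL : ∀ a : A, ∀ x ∈ J, a * x ∈ J)
    (ι : Type*) (p : Filter ι) [p.NeBot] (e : ι → ↥I)
    (hb : ∃ C : ℝ, ∀ i, ‖e i‖ ≤ C)
    (hai : ∀ x : ↥I, Tendsto (fun i => (e i : A) * (x : A)) p (𝓝 (x : A))) :
    IsClosed ((I : Set A) + (J : Set A)) := by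
  obtain ⟨C, hC⟩ := hb
  have hbound (i : ι) (x : A) : ‖(e i : A) * x‖ ≤ C * ‖x‖ :=
    (norm_mul_le _ _).trans (mul_le_mul_of_nonneg_right (hC i) (norm_nonneg x))
  exact AddSubgroup.isClosed_add_of_approxIdentity (I := I.toAddSubgroup)
    (J := J.toAddSubgroup) hIc hJc (T := fun i => AddMonoidHom.mulLeft (e i : A))
    (fun i x => hIR x _ (e i).2) (fun i x hx => hJL _ x hx) hbound (fun x hx => hai ⟨x, hx⟩)

end Paper
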